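/- arXiv:1510.03328 — 4 statements merged into one kernel-verified Lean document; each statement's English description precedes it below -/
import Mathlib

section
/- If A and B are bounded self-adjoint operators on a complex Hilbert space with spectrum of A contained in [r1, r2] and spectrum of B contained in [t1, t2], then the spectrum of A + iB is contained in the rectangle [r1, r2] + i[t1, t2] = {a + ib : a ∈ [r1, r2], b ∈ [t1, t2]}. -/
open scoped InnerProductSpace

/-- If the spectrum of a self-adjoint operator has real part bounded below by `r`,
then the quadratic form is bounded below by `r‖x‖²`. -/
lemma re_inner_ge_of_spectrum_re_ge
    {H : Type*} [NormedAddCommGroup H] [InnerProductSpace ℂ H] [CompleteSpace H]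
    (A : H →L[ℂ] H) (hA : IsSelfAdjoint A) (r : ℝ)
    (h : ∀ z ∈ spectrum ℂ A, r ≤ z.re) (x : H) :
    r * ‖x‖ ^ 2 ≤ (⟪A x, x⟫_ℂ).re := by
  set A' : H →L[ℂ] H := A - algebraMap ℂ (H →L[ℂ] H) (r : ℂ) with hA'def
  have hsa : IsSelfAdjoint A' := by
    refine hA.sub ?_
    rw [IsSelfAdjoint, Algebra.algebraMap_eq_smul_one, star_smul, star_one,
      Complex.star_def, Complex.conj_ofReal]
  have hnn : 0 ≤ A' := by
    rw [StarOrderedRing.nonneg_iff_spectrum_nonneg (R := ℝ) A' hsa]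
    intro μ hμ
    have hμ' : (μ : ℂ) ∈ spectrum ℂ A' := by
      rw [← hsa.spectrumRestricts.algebraMap_image]
      exact ⟨μ, hμ, rfl⟩
    rw [← spectrum.sub_singleton_eq] at hμ'
    obtain ⟨w, hw, v, hv, hwv⟩ := hμ'
    rw [Set.mem_singleton_iff] at hv
    subst hv
    have : μ = w.re - r := by
      have := congrArg Complex.re hwv
      simpa using this.symm
    have := h w hw
    linarith
  have hpos := (ContinuousLinearMap.nonneg_iff_isPositive A').mp hnn
  have h0 := hpos.inner_nonneg_left x
  have h0' : 0 ≤ (⟪A' x, x⟫_ℂ).re := (Complex.nonneg_iff.mp h0).1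
  have hcalc : (⟪A' x, x⟫_ℂ).re = (⟪A x, x⟫_ℂ).re - r * ‖x‖ ^ 2 := by
    rw [hA'def]
    rw [ContinuousLinearMap.sub_apply, inner_sub_left, Algebra.algebraMap_eq_smul_one]
    rw [ContinuousLinearMap.smul_apply, ContinuousLinearMap.one_apply, inner_smul_left,
      Complex.conj_ofReal, inner_self_eq_norm_sq_to_K]
    push_cast
    simp [← Complex.ofReal_pow]
  rw [hcalc] at h0'
  linarith

/-- The quadratic form of a self-adjoint operator is real. -/
lemma im_inner_self_eq_zero {H : Type*} [NormedAddCommGroup H] [InnerProductSpace ℂ H]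
    [CompleteSpace H] (A : H →L[ℂ] H) (hA : IsSelfAdjoint A) (x : H) :
    (⟪A x, x⟫_ℂ).im = 0 := by
  have hsym := (ContinuousLinearMap.isSelfAdjoint_iff_isSymmetric.mp hA) x x
  have : (starRingEnd ℂ) (⟪A x, x⟫_ℂ) = ⟪A x, x⟫_ℂ := by
    rw [inner_conj_symm]
    exact hsym.symm
  exact (Complex.conj_eq_iff_im.mp this)

/-- An operator whose quadratic form is uniformly bounded away from zero (in real or
imaginary part) is invertible. -/
lemma isUnit_of_re_im_bound {H : Type*} [NormedAddCommGroup H] [InnerProductSpace ℂ H]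
    [CompleteSpace H] (T : H →L[ℂ] H) (c : ℝ) (hc : 0 < c)
    (hb : ∀ x : H, c * ‖x‖ ^ 2 ≤ |(⟪T x, x⟫_ℂ).re| ∨ c * ‖x‖ ^ 2 ≤ |(⟪T x, x⟫_ℂ).im|) :
    IsUnit T := by
  refine ContinuousLinearMap.isUnit_of_forall_le_norm_inner_map T (c := ⟨c, hc.le⟩)
    (by exact_mod_cast hc) fun x => ?_
  have h1 : |(⟪T x, x⟫_ℂ).re| ≤ ‖(⟪T x, x⟫_ℂ)‖ := Complex.abs_re_le_norm _
  have h2 : |(⟪T x, x⟫_ℂ).im| ≤ ‖(⟪T x, x⟫_ℂ)‖ := Complex.abs_im_le_norm _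
  have : (‖x‖ ^ 2 * (⟨c, hc.le⟩ : NNReal) : ℝ) = c * ‖x‖ ^ 2 := by
    simp [mul_comm]
  refine le_trans (le_of_eq this) ?_
  rcases hb x with h | h
  · exact h.trans h1
  · exact h.trans h2

/-- If `A` and `B` are bounded self-adjoint operators on a complex Hilbert space with
`σ(A) ⊆ [r1, r2]` and `σ(B) ⊆ [t1, t2]`, then `σ(A + iB) ⊆ [r1, r2] + i[t1, t2]`. -/
theorem spectrum_add_smul_I_subset_rectangle
    {H : Type*} [NormedAddCommGroup H] [InnerProductSpace ℂ H] [CompleteSpace H]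
    (A B : H →L[ℂ] H) (hA : IsSelfAdjoint A) (hB : IsSelfAdjoint B)
    (r1 r2 t1 t2 : ℝ) (hr : r1 ≤ r2) (ht : t1 ≤ t2)
    (hsA : spectrum ℂ A ⊆ (fun x : ℝ => (x : ℂ)) '' Set.Icc r1 r2)
    (hsB : spectrum ℂ B ⊆ (fun x : ℝ => (x : ℂ)) '' Set.Icc t1 t2) :
    spectrum ℂ (A + Complex.I • B) ⊆
      {z : ℂ | z.re ∈ Set.Icc r1 r2 ∧ z.im ∈ Set.Icc t1 t2} := by
  have himA : ∀ x : H, (⟪A x, x⟫_ℂ).im = 0 := fun x => im_inner_self_eq_zero A hA x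
  have himB : ∀ x : H, (⟪B x, x⟫_ℂ).im = 0 := fun x => im_inner_self_eq_zero B hB x
  have hA1 : ∀ x : H, r1 * ‖x‖ ^ 2 ≤ (⟪A x, x⟫_ℂ).re := by
    refine fun x => re_inner_ge_of_spectrum_re_ge A hA r1 (fun w hw => ?_) x
    obtain ⟨a, ha, rfl⟩ := hsA hw
    simpa using ha.1
  have hB1 : ∀ x : H, t1 * ‖x‖ ^ 2 ≤ (⟪B x, x⟫_ℂ).re := by
    refine fun x => re_inner_ge_of_spectrum_re_ge B hB t1 (fun w hw => ?_) x
    obtain ⟨a, ha, rfl⟩ := hsB hw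
    simpa using ha.1
  have hA2 : ∀ x : H, (⟪A x, x⟫_ℂ).re ≤ r2 * ‖x‖ ^ 2 := by
    intro x
    have := re_inner_ge_of_spectrum_re_ge (-A) hA.neg (-r2) (fun w hw => ?_) x
    · rw [ContinuousLinearMap.neg_apply, inner_neg_left] at this
      simp only [Complex.neg_re] at this
      linarith
    · rw [← spectrum.neg_eq, Set.mem_neg] at hw
      obtain ⟨a, ha, haw⟩ := hsA hw
      have hwa : w = -(a : ℂ) := by simp only [show ((a : ℂ)) = -w from haw, neg_neg]
      rw [hwa]
      simpa using ha.2
  have hB2 : ∀ x : H, (⟪B x, x⟫_ℂ).re ≤ t2 * ‖x‖ ^ 2 := by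
    intro x
    have := re_inner_ge_of_spectrum_re_ge (-B) hB.neg (-t2) (fun w hw => ?_) x
    · rw [ContinuousLinearMap.neg_apply, inner_neg_left] at this
      simp only [Complex.neg_re] at this
      linarith
    · rw [← spectrum.neg_eq, Set.mem_neg] at hw
      obtain ⟨a, ha, haw⟩ := hsB hw
      have hwa : w = -(a : ℂ) := by simp only [show ((a : ℂ)) = -w from haw, neg_neg]
      rw [hwa]
      simpa using ha.2
  intro z hz
  by_contra hcon
  simp only [Set.mem_setOf_eq, Set.mem_Icc, not_and_or, not_le] at hcon
  set T : H →L[ℂ] H := algebraMap ℂ (H →L[ℂ] H) z - (A + Complex.I • B) with hTdef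
  have hTinner : ∀ x : H, (⟪T x, x⟫_ℂ) =
      (starRingEnd ℂ) z * ⟪x, x⟫_ℂ - ⟪A x, x⟫_ℂ + Complex.I * ⟪B x, x⟫_ℂ := by
    intro x
    rw [hTdef]
    rw [ContinuousLinearMap.sub_apply, ContinuousLinearMap.add_apply, inner_sub_left,
      inner_add_left, ContinuousLinearMap.smul_apply, inner_smul_left,
      Algebra.algebraMap_eq_smul_one, ContinuousLinearMap.smul_apply,
      ContinuousLinearMap.one_apply, inner_smul_left, Complex.conj_I]
    ring
  have hself1 : ∀ x : H, (⟪x, x⟫_ℂ).re = ‖x‖ ^ 2 := by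
    intro x
    rw [← RCLike.re_to_complex]
    exact inner_self_eq_norm_sq x
  have hself2 : ∀ x : H, (⟪x, x⟫_ℂ).im = 0 := by
    intro x
    rw [← RCLike.im_to_complex]
    exact inner_self_im x
  have hre : ∀ x : H, (⟪T x, x⟫_ℂ).re = z.re * ‖x‖ ^ 2 - (⟪A x, x⟫_ℂ).re := by
    intro x
    rw [hTinner x]
    simp only [Complex.add_re, Complex.sub_re, Complex.mul_re, Complex.conj_re,
      Complex.conj_im, Complex.I_re, Complex.I_im, hself1 x, hself2 x, himB x]
    ring
  have him : ∀ x : H, (⟪T x, x⟫_ℂ).im = (⟪B x, x⟫_ℂ).re - z.im * ‖x‖ ^ 2 := by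
    intro x
    rw [hTinner x]
    simp only [Complex.add_im, Complex.sub_im, Complex.mul_im, Complex.conj_re,
      Complex.conj_im, Complex.I_re, Complex.I_im, hself1 x, hself2 x, himA x]
    ring
  have hunit : IsUnit T := by
    rcases hcon with (h1 | h2) | (h3 | h4)
    · refine isUnit_of_re_im_bound T (r1 - z.re) (by linarith) fun x => Or.inl ?_
      have := hA1 x
      rw [hre x, le_abs]
      right
      nlinarith [sq_nonneg ‖x‖]
    · refine isUnit_of_re_im_bound T (z.re - r2) (by linarith) fun x => Or.inl ?_
      have := hA2 x
      rw [hre x, le_abs]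
      left
      nlinarith [sq_nonneg ‖x‖]
    · refine isUnit_of_re_im_bound T (t1 - z.im) (by linarith) fun x => Or.inr ?_
      have := hB1 x
      rw [him x, le_abs]
      left
      nlinarith [sq_nonneg ‖x‖]
    · refine isUnit_of_re_im_bound T (z.im - t2) (by linarith) fun x => Or.inr ?_
      have := hB2 x
      rw [him x, le_abs]
      right
      nlinarith [sq_nonneg ‖x‖]
  exact spectrum.notMem_iff.mpr hunit hz
end

section
/- If A1 is a bounded self-adjoint operator and B1 is a positive invertible bounded operator on a complex Hilbert space, then A1 + iB1 is invertible. -/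
open Complex in
/-- If `A1` is a bounded self-adjoint operator and `B1` is a positive invertible bounded
operator on a complex Hilbert space, then `A1 + iB1` is invertible. -/
theorem isUnit_add_smul_I_of_selfAdjoint_of_positive_of_isUnit
    {H : Type*} [NormedAddCommGroup H] [InnerProductSpace ℂ H] [CompleteSpace H]
    (A1 B1 : H →L[ℂ] H) (hA : IsSelfAdjoint A1) (hB : B1.IsPositive) (hBinv : IsUnit B1) :
    IsUnit (A1 + Complex.I • B1) := by
  have hB0 : (0 : H →L[ℂ] H) ≤ B1 := (ContinuousLinearMap.nonneg_iff_isPositive B1).mpr hB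
  set S : H →L[ℂ] H := CFC.sqrt B1 with hSdef
  have hS0 : (0 : H →L[ℂ] H) ≤ S := CFC.sqrt_nonneg B1
  have hSsa : IsSelfAdjoint S := IsSelfAdjoint.of_nonneg hS0
  have hSS : S * S = B1 := CFC.sqrt_mul_sqrt_self B1 hB0
  -- S is a unit since S * S = B1 is
  obtain ⟨u, hu⟩ := hBinv
  have hleft : (↑u⁻¹ * S) * S = 1 := by
    rw [mul_assoc, hSS, ← hu, u.inv_mul]
  have hright : S * (S * ↑u⁻¹) = 1 := by
    rw [← mul_assoc, hSS, ← hu, u.mul_inv]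
  have hinv_eq : (↑u⁻¹ * S : H →L[ℂ] H) = S * ↑u⁻¹ := by
    calc (↑u⁻¹ * S : H →L[ℂ] H) = (↑u⁻¹ * S) * (S * (S * ↑u⁻¹)) := by rw [hright, mul_one]
      _ = ((↑u⁻¹ * S) * S) * (S * ↑u⁻¹) := by simp only [mul_assoc]
      _ = S * ↑u⁻¹ := by rw [hleft, one_mul]
  set T : H →L[ℂ] H := ↑u⁻¹ * S with hTdef
  have hTS : T * S = 1 := hleft
  have hST : S * T = 1 := by rw [hinv_eq]; exact hright
  have hSunit : IsUnit S := ⟨⟨S, T, hST, hTS⟩, rfl⟩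
  have hTsa : IsSelfAdjoint T := by
    have : star T * (S * T) = star T := by rw [hST, mul_one]
    have h2 : (star T * S) * T = star T := by rw [mul_assoc]; exact this
    have h3 : star T * S = star (S * T) := by
      rw [hSsa.star_eq.symm]
      simp [star_mul, hSsa.star_eq]
    rw [h3, hST, star_one, one_mul] at h2
    exact h2.symm
  -- C := T * A1 * T is self-adjoint
  set C : H →L[ℂ] H := T * A1 * T with hCdef
  have hCsa : IsSelfAdjoint C := by
    show star (T * A1 * T) = T * A1 * T
    simp [star_mul, hTsa.star_eq, hA.star_eq, mul_assoc]
  -- C + I • 1 is a unit since spectrum of C is real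
  have hCunit : IsUnit (C + Complex.I • (1 : H →L[ℂ] H)) := by
    have hmem : (-Complex.I) ∉ spectrum ℂ C := by
      intro hmem
      have := hCsa.im_eq_zero_of_mem_spectrum hmem
      simp at this
    rw [spectrum.notMem_iff] at hmem
    have halg : (algebraMap ℂ (H →L[ℂ] H)) (-Complex.I) - C
        = -(C + Complex.I • (1 : H →L[ℂ] H)) := by
      rw [Algebra.algebraMap_eq_smul_one]
      module
    rw [halg] at hmem
    exact (IsUnit.neg_iff _).mp hmem
  -- A1 + I • B1 = S * (C + I • 1) * S
  have key : S * (C + Complex.I • (1 : H →L[ℂ] H)) * S = A1 + Complex.I • B1 := by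
    have h1 : S * C * S = A1 := by
      rw [hCdef]
      calc S * (T * A1 * T) * S = (S * T) * A1 * (T * S) := by simp only [mul_assoc]
        _ = A1 := by rw [hST, hTS, one_mul, mul_one]
    have h2 : S * (Complex.I • (1 : H →L[ℂ] H)) * S = Complex.I • B1 := by
      rw [mul_smul_comm, smul_mul_assoc, mul_one, hSS]
    rw [mul_add, add_mul, h1, h2]
  rw [← key]
  exact (hSunit.mul hCunit).mul hSunit
end

section
/- For 0 < r < 1 and 0 < φ < π, the function h(r, φ, θ1, θ2) (as defined via the four arctan terms) satisfies −(2/π)·arctan(2r sinφ/(1−r²)) ≤ h(r, φ, θ1, θ2) ≤ 0 for all θ1, θ2 ∈ [−π, 0], with the lower bound attained at θ1 = θ2 = −π/2 and the upper bound attained exactly when θ1 ∈ {−π, 0} or θ2 ∈ {−π, 0}. -/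
open Real Set

noncomputable def hfun (r φ θ1 θ2 : ℝ) : ℝ :=
  (1 / Real.pi) *
    (Real.arctan (r * Real.sin (φ - (θ1 + θ2)) / (1 - r * Real.cos (φ - (θ1 + θ2))))
      + Real.arctan (r * Real.sin (φ + (θ1 + θ2)) / (1 - r * Real.cos (φ + (θ1 + θ2))))
      - Real.arctan (r * Real.sin (φ - (θ1 - θ2)) / (1 - r * Real.cos (φ - (θ1 - θ2))))
      - Real.arctan (r * Real.sin (φ + (θ1 - θ2)) / (1 - r * Real.cos (φ + (θ1 - θ2)))))

noncomputable def gk (r x : ℝ) : ℝ := Real.arctan (r * Real.sin x / (1 - r * Real.cos x))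

noncomputable def Fk (r φ t : ℝ) : ℝ := gk r (φ - t) + gk r (φ + t)

noncomputable def Psi (r φ c : ℝ) : ℝ := Fk r φ (Real.arccos c)

noncomputable def pk (r c : ℝ) : ℝ := (r * c - r ^ 2) / (1 - 2 * r * c + r ^ 2)

lemma denom_pos {r : ℝ} (h0 : 0 < r) (h1 : r < 1) (x : ℝ) : 0 < 1 - r * Real.cos x := by
  nlinarith [Real.cos_le_one x, Real.neg_one_le_cos x]

lemma Q_pos {r : ℝ} (h0 : 0 < r) (h1 : r < 1) {c : ℝ} (hc : c ≤ 1) :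
    0 < 1 - 2 * r * c + r ^ 2 := by nlinarith

lemma gk_hasDeriv {r : ℝ} (h0 : 0 < r) (h1 : r < 1) (x : ℝ) :
    HasDerivAt (gk r) (pk r (Real.cos x)) x := by
  have hden := denom_pos h0 h1 x
  have hu := (((Real.hasDerivAt_sin x).const_mul r).div
      (((Real.hasDerivAt_cos x).const_mul r).const_sub 1) hden.ne')
  have h := hu.arctan
  have hQ := Q_pos h0 h1 (Real.cos_le_one x)
  have hsc := Real.sin_sq_add_cos_sq x
  have e1 : r * Real.cos x * (1 - r * Real.cos x) - r * Real.sin x * -(r * -Real.sin x)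
      = r * Real.cos x - r ^ 2 := by linear_combination (-(r^2) : ℝ) * hsc
  have e2 : 1 + (r * Real.sin x / (1 - r * Real.cos x)) ^ 2
      = (1 - 2 * r * Real.cos x + r ^ 2) / (1 - r * Real.cos x) ^ 2 := by
    field_simp
    linear_combination (r^2 : ℝ) * hsc
  convert h using 1
  · funext y; rfl
  rw [e1]; simp only [Pi.div_apply]; rw [e2]
  unfold pk
  field_simp

lemma Fk_hasDeriv {r : ℝ} (h0 : 0 < r) (h1 : r < 1) (φ t : ℝ) :
    HasDerivAt (Fk r φ) (pk r (Real.cos (φ + t)) - pk r (Real.cos (φ - t))) t := by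
  have hm : HasDerivAt (fun t : ℝ => φ - t) (-1) t := by
    simpa using (hasDerivAt_id t).const_sub φ
  have hp : HasDerivAt (fun t : ℝ => φ + t) 1 t := by
    simpa using (hasDerivAt_id t).const_add φ
  have h1' := (gk_hasDeriv h0 h1 (φ - t)).comp t hm
  have h2' := (gk_hasDeriv h0 h1 (φ + t)).comp t hp
  have := h1'.add h2'
  exact (this.congr_deriv (by ring)).congr_of_eventuallyEq (Filter.Eventually.of_forall fun s => rfl)

lemma pk_lt {r : ℝ} (h0 : 0 < r) (h1 : r < 1) {a b : ℝ} (ha : -1 ≤ a) (hb : b ≤ 1)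
    (hab : a < b) : pk r a < pk r b := by
  have hQa : 0 < 1 - 2 * r * a + r ^ 2 := Q_pos h0 h1 (by linarith)
  have hQb : 0 < 1 - 2 * r * b + r ^ 2 := Q_pos h0 h1 hb
  rw [pk, pk, div_lt_div_iff₀ hQa hQb]
  nlinarith [mul_pos (mul_pos h0 (sub_pos.2 hab)) (show (0:ℝ) < 1 - r ^ 2 by nlinarith)]

lemma Fk_anti {r φ : ℝ} (h0 : 0 < r) (h1 : r < 1) (hφ1 : 0 < φ) (hφ2 : φ < Real.pi) :
    StrictAntiOn (Fk r φ) (Set.Icc 0 Real.pi) := by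
  apply strictAntiOn_of_deriv_neg (convex_Icc _ _)
  · exact fun x _ => (Fk_hasDeriv h0 h1 φ x).continuousAt.continuousWithinAt
  · intro t ht
    rw [interior_Icc] at ht
    rw [(Fk_hasDeriv h0 h1 φ t).deriv]
    have hsφ : 0 < Real.sin φ := Real.sin_pos_of_pos_of_lt_pi hφ1 hφ2
    have hst : 0 < Real.sin t := Real.sin_pos_of_pos_of_lt_pi ht.1 ht.2
    have hc : Real.cos (φ + t) < Real.cos (φ - t) := by
      rw [Real.cos_add, Real.cos_sub]
      nlinarith [mul_pos hsφ hst]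
    have := pk_lt h0 h1 (Real.neg_one_le_cos (φ + t)) (Real.cos_le_one (φ - t)) hc
    linarith

lemma Psi_mono {r φ : ℝ} (h0 : 0 < r) (h1 : r < 1) (hφ1 : 0 < φ) (hφ2 : φ < Real.pi) :
    StrictMonoOn (Psi r φ) (Set.Icc (-1) 1) := by
  intro a ha b hb hab
  exact Fk_anti h0 h1 hφ1 hφ2 ⟨Real.arccos_nonneg b, Real.arccos_le_pi b⟩
    ⟨Real.arccos_nonneg a, Real.arccos_le_pi a⟩ (Real.strictAntiOn_arccos ha hb hab)

lemma Fk_even (r φ t : ℝ) : Fk r φ (-t) = Fk r φ t := by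
  unfold Fk
  rw [sub_neg_eq_add, ← sub_eq_add_neg, add_comm]

lemma gk_per (r x : ℝ) : gk r (x - 2 * Real.pi) = gk r x := by
  unfold gk; rw [Real.sin_sub_two_pi, Real.cos_sub_two_pi]

lemma gk_per' (r x : ℝ) : gk r (x + 2 * Real.pi) = gk r x := by
  unfold gk; rw [Real.sin_add_two_pi, Real.cos_add_two_pi]

lemma Fk_per (r φ t : ℝ) : Fk r φ (t + 2 * Real.pi) = Fk r φ t := by
  unfold Fk
  rw [show φ - (t + 2 * Real.pi) = (φ - t) - 2 * Real.pi by ring,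
    show φ + (t + 2 * Real.pi) = (φ + t) + 2 * Real.pi by ring, gk_per, gk_per']

lemma Fk_eq_Psi0 (r φ : ℝ) {t : ℝ} (h0 : 0 ≤ t) (h1 : t ≤ Real.pi) :
    Fk r φ t = Psi r φ (Real.cos t) := by
  unfold Psi; rw [Real.arccos_cos h0 h1]

lemma Fk_eq_Psi (r φ : ℝ) {t : ℝ} (hl : -(2 * Real.pi) ≤ t) (hr : t ≤ Real.pi) :
    Fk r φ t = Psi r φ (Real.cos t) := by
  rcases le_or_gt 0 t with h | h
  · exact Fk_eq_Psi0 r φ h hr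
  rcases le_or_gt (-Real.pi) t with h' | h'
  · rw [← Fk_even, ← Real.cos_neg t]
    exact Fk_eq_Psi0 r φ (by linarith) (by linarith)
  · rw [← Fk_per, ← Real.cos_add_two_pi]
    exact Fk_eq_Psi0 r φ (by linarith) (by nlinarith [Real.pi_pos])

lemma hfun_eq {r φ θ1 θ2 : ℝ} (hθ1 : θ1 ∈ Set.Icc (-Real.pi) 0)
    (hθ2 : θ2 ∈ Set.Icc (-Real.pi) 0) :
    hfun r φ θ1 θ2 = (1 / Real.pi) *
      (Psi r φ (Real.cos (θ1 + θ2)) - Psi r φ (Real.cos (θ1 - θ2))) := by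
  have hπ := Real.pi_pos
  obtain ⟨h1a, h1b⟩ := hθ1; obtain ⟨h2a, h2b⟩ := hθ2
  have e : hfun r φ θ1 θ2
      = (1 / Real.pi) * (Fk r φ (θ1 + θ2) - Fk r φ (θ1 - θ2)) := by
    unfold hfun Fk gk; ring
  rw [e, Fk_eq_Psi r φ (by linarith) (by linarith),
    Fk_eq_Psi r φ (by linarith) (by linarith)]

lemma Psi_diff {r φ : ℝ} (h0 : 0 < r) (h1 : r < 1) (hφ1 : 0 < φ) (hφ2 : φ < Real.pi) :
    Psi r φ (-1) - Psi r φ 1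
      = -2 * Real.arctan (2 * r * Real.sin φ / (1 - r ^ 2)) := by
  have hsc := Real.sin_sq_add_cos_sq φ
  have dp1 : 0 < 1 + r * Real.cos φ := by nlinarith [Real.neg_one_le_cos φ]
  have dp2 : 0 < 1 - r * Real.cos φ := denom_pos h0 h1 φ
  have hF1 : Psi r φ (-1) = -2 * Real.arctan (r * Real.sin φ / (1 + r * Real.cos φ)) := by
    unfold Psi
    rw [Real.arccos_neg_one]
    unfold Fk gk
    rw [Real.sin_sub_pi, Real.cos_sub_pi, Real.sin_add_pi, Real.cos_add_pi,
      show r * -Real.sin φ / (1 - r * -Real.cos φ)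
        = -(r * Real.sin φ / (1 + r * Real.cos φ)) by ring_nf, Real.arctan_neg]
    ring
  have hF0 : Psi r φ 1 = 2 * Real.arctan (r * Real.sin φ / (1 - r * Real.cos φ)) := by
    unfold Psi
    rw [Real.arccos_one]
    unfold Fk gk
    rw [sub_zero, add_zero]; ring
  have hxy : (r * Real.sin φ / (1 + r * Real.cos φ))
      * (r * Real.sin φ / (1 - r * Real.cos φ)) < 1 := by
    rw [div_mul_div_comm, div_lt_one (by nlinarith)]
    nlinarith [hsc, (show r^2 < 1 by nlinarith)]
  rw [hF1, hF0, show -2 * Real.arctan (r * Real.sin φ / (1 + r * Real.cos φ))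
      - 2 * Real.arctan (r * Real.sin φ / (1 - r * Real.cos φ))
      = -2 * (Real.arctan (r * Real.sin φ / (1 + r * Real.cos φ))
        + Real.arctan (r * Real.sin φ / (1 - r * Real.cos φ))) by ring,
    Real.arctan_add hxy]
  congr 2
  field_simp
  ring_nf
  rw [show (1 - Real.sin φ ^ 2 * r ^ 2 - r ^ 2 * Real.cos φ ^ 2) = 1 - r ^ 2 from by
    linear_combination (-(r ^ 2)) * hsc]

lemma sin_nonpos_Icc {θ : ℝ} (h : θ ∈ Set.Icc (-Real.pi) 0) : Real.sin θ ≤ 0 := by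
  have : 0 ≤ Real.sin (-θ) :=
    Real.sin_nonneg_of_nonneg_of_le_pi (by linarith [h.2]) (by linarith [h.1])
  rw [Real.sin_neg] at this; linarith

lemma sin_eq_zero_Icc {θ : ℝ} (h : θ ∈ Set.Icc (-Real.pi) 0) :
    Real.sin θ = 0 ↔ θ = -Real.pi ∨ θ = 0 := by
  constructor
  · intro hs
    by_contra hcon
    push_neg at hcon
    have h1 : -Real.pi < θ := lt_of_le_of_ne h.1 (Ne.symm hcon.1)
    have h2 : θ < 0 := lt_of_le_of_ne h.2 hcon.2
    have hp : 0 < Real.sin (-θ) := Real.sin_pos_of_pos_of_lt_pi (by linarith) (by linarith)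
    rw [Real.sin_neg] at hp; linarith
  · rintro (rfl | rfl) <;> simp

/-- For `0 < r < 1` and `0 < φ < π`: `−(2/π) arctan (2 r sin φ/(1−r²)) ≤ h ≤ 0` on
`[−π,0]²`, with the lower bound attained at `θ1 = θ2 = −π/2` and the upper bound attained
exactly when `θ1 ∈ {−π, 0}` or `θ2 ∈ {−π, 0}`. -/
theorem hfun_bounds_of_phi_pos (r φ : ℝ) (h0 : 0 < r) (h1 : r < 1)
    (hφ1 : 0 < φ) (hφ2 : φ < Real.pi) :
    (∀ θ1 ∈ Set.Icc (-Real.pi) 0, ∀ θ2 ∈ Set.Icc (-Real.pi) 0,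
      -(2 / Real.pi) * Real.arctan (2 * r * Real.sin φ / (1 - r ^ 2)) ≤ hfun r φ θ1 θ2 ∧
        hfun r φ θ1 θ2 ≤ 0) ∧
    hfun r φ (-(Real.pi / 2)) (-(Real.pi / 2))
      = -(2 / Real.pi) * Real.arctan (2 * r * Real.sin φ / (1 - r ^ 2)) ∧
    (∀ θ1 ∈ Set.Icc (-Real.pi) 0, ∀ θ2 ∈ Set.Icc (-Real.pi) 0,
      (hfun r φ θ1 θ2 = 0 ↔ (θ1 = -Real.pi ∨ θ1 = 0) ∨ (θ2 = -Real.pi ∨ θ2 = 0))) := by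
  have hπ := Real.pi_pos
  have hmono := Psi_mono h0 h1 hφ1 hφ2
  have hdiff := Psi_diff h0 h1 hφ1 hφ2
  have hmem : ∀ x : ℝ, Real.cos x ∈ Set.Icc (-1 : ℝ) 1 :=
    fun x => ⟨Real.neg_one_le_cos x, Real.cos_le_one x⟩
  have hm1 : (-1 : ℝ) ∈ Set.Icc (-1 : ℝ) 1 := by norm_num
  have hp1 : (1 : ℝ) ∈ Set.Icc (-1 : ℝ) 1 := by norm_num
  have hcc : ∀ θ1 θ2 : ℝ, Real.cos (θ1 - θ2) - Real.cos (θ1 + θ2)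
      = 2 * (Real.sin θ1 * Real.sin θ2) := by
    intro θ1 θ2; rw [Real.cos_sub, Real.cos_add]; ring
  refine ⟨?_, ?_, ?_⟩
  · intro θ1 hθ1 θ2 hθ2
    rw [hfun_eq hθ1 hθ2]
    have hsinsin : 0 ≤ Real.sin θ1 * Real.sin θ2 := by
      nlinarith [sin_nonpos_Icc hθ1, sin_nonpos_Icc hθ2]
    have hcsd : Real.cos (θ1 + θ2) ≤ Real.cos (θ1 - θ2) := by
      have := hcc θ1 θ2; linarith
    have hup : Psi r φ (Real.cos (θ1 + θ2)) ≤ Psi r φ (Real.cos (θ1 - θ2)) :=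
      hmono.monotoneOn (hmem _) (hmem _) hcsd
    have hl1 : Psi r φ (-1) ≤ Psi r φ (Real.cos (θ1 + θ2)) :=
      hmono.monotoneOn hm1 (hmem _) (Real.neg_one_le_cos _)
    have hl2 : Psi r φ (Real.cos (θ1 - θ2)) ≤ Psi r φ 1 :=
      hmono.monotoneOn (hmem _) hp1 (Real.cos_le_one _)
    have h1π : 0 < 1 / Real.pi := by positivity
    constructor
    · have : Psi r φ (-1) - Psi r φ 1
          ≤ Psi r φ (Real.cos (θ1 + θ2)) - Psi r φ (Real.cos (θ1 - θ2)) := by linarith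
      calc -(2 / Real.pi) * Real.arctan (2 * r * Real.sin φ / (1 - r ^ 2))
          = (1 / Real.pi) * (Psi r φ (-1) - Psi r φ 1) := by rw [hdiff]; ring
        _ ≤ _ := by nlinarith
    · nlinarith
  · have hhalf : -(Real.pi / 2) ∈ Set.Icc (-Real.pi) 0 := by
      constructor <;> [linarith; linarith]
    rw [hfun_eq hhalf hhalf,
      show -(Real.pi / 2) + -(Real.pi / 2) = -Real.pi by ring,
      show -(Real.pi / 2) - -(Real.pi / 2) = (0 : ℝ) by ring,
      Real.cos_neg, Real.cos_pi, Real.cos_zero, hdiff]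
    field_simp
  · intro θ1 hθ1 θ2 hθ2
    rw [hfun_eq hθ1 hθ2]
    have hinj := hmono.injOn
    constructor
    · intro hz
      rcases mul_eq_zero.mp hz with h' | h'
      · exact absurd h' (by positivity)
      have hPsiEq : Psi r φ (Real.cos (θ1 + θ2)) = Psi r φ (Real.cos (θ1 - θ2)) :=
        sub_eq_zero.mp h'
      have hcos : Real.cos (θ1 + θ2) = Real.cos (θ1 - θ2) :=
        hinj (hmem _) (hmem _) hPsiEq
      have hss : Real.sin θ1 * Real.sin θ2 = 0 := by
        have := hcc θ1 θ2; linarith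
      rcases mul_eq_zero.mp hss with h'' | h''
      · exact Or.inl ((sin_eq_zero_Icc hθ1).mp h'')
      · exact Or.inr ((sin_eq_zero_Icc hθ2).mp h'')
    · intro hor
      have hss : Real.sin θ1 * Real.sin θ2 = 0 := by
        rcases hor with h' | h'
        · rw [(sin_eq_zero_Icc hθ1).mpr h', zero_mul]
        · rw [(sin_eq_zero_Icc hθ2).mpr h', mul_zero]
      have hcos : Real.cos (θ1 + θ2) = Real.cos (θ1 - θ2) := by
        have := hcc θ1 θ2; linarith
      rw [hcos]; ring
end

section
/- Let H be a complex Hilbert space, v ∈ H, and let l(v) be the left creation operator on the full Fock space F(H). Then the spectrum of the self-adjoint operator X = l(v) + l(v)* equals the interval [−2‖v‖, 2‖v‖]. -/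
private noncomputable def fockVec {F : Type*} [NormedAddCommGroup F] [InnerProductSpace ℂ F]
    (A : F →L[ℂ] F) (Ω : F) (r : ℝ) : ℕ → F
  | 0 => Ω
  | (k + 1) => ((r : ℂ)⁻¹) • A (fockVec A Ω r k)

private lemma fockVec_zero {F : Type*} [NormedAddCommGroup F] [InnerProductSpace ℂ F]
    (A : F →L[ℂ] F) (Ω : F) (r : ℝ) : fockVec A Ω r 0 = Ω := rfl

private lemma fockVec_succ {F : Type*} [NormedAddCommGroup F] [InnerProductSpace ℂ F]
    (A : F →L[ℂ] F) (Ω : F) (r : ℝ) (k : ℕ) :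
    fockVec A Ω r (k + 1) = ((r : ℂ)⁻¹) • A (fockVec A Ω r k) := rfl

private lemma sin_pair_aux' (a b s t : ℝ) (h1 : a^2+b^2=1) (h2 : s^2+t^2=1) (ht : 0 ≤ t) :
    s^2/2 ≤ a^2 + (a*t+b*s)^2 := by
  have ht1 : t ≤ 1 := by nlinarith [sq_nonneg s]
  have hid : (1-t)*(a^2+(a*t+b*s)^2)
      = (1-t)^2*(a^2+b^2) + t*(s*a+(1-t)*b)^2 + (b^2*(1-t) - a^2*t)*(s^2+t^2-1) := by ring
  rw [h2] at hid
  nlinarith [mul_nonneg ht (sq_nonneg (s*a+(1-t)*b)), sq_nonneg (a*t+b*s), sq_nonneg a,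
    mul_nonneg (sub_nonneg.mpr ht1) (sq_nonneg (a*t+b*s))]

private lemma sin_pair_aux (a b s t : ℝ) (h1 : a^2+b^2=1) (h2 : s^2+t^2=1) :
    s^2/2 ≤ a^2 + (a*t+b*s)^2 := by
  rcases le_or_gt 0 t with ht | ht
  · exact sin_pair_aux' a b s t h1 h2 ht
  · have := sin_pair_aux' a (-b) s (-t) (by nlinarith) (by nlinarith) (by linarith)
    nlinarith [this]

open ContinuousLinearMap in
private lemma fock_aux_mem_spectrum {F : Type*} [NormedAddCommGroup F] [InnerProductSpace ℂ F]
    [CompleteSpace F] (A : F →L[ℂ] F) (Ω : F) (hΩ : ‖Ω‖ = 1) {r : ℝ} (hr : 0 < r)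
    (hAA : ContinuousLinearMap.adjoint A * A = ((r : ℂ) ^ 2) • (1 : F →L[ℂ] F))
    (hvac : ContinuousLinearMap.adjoint A Ω = 0)
    (θ : ℝ) (hθ : Real.sin θ ≠ 0) :
    ((2 * r * Real.cos θ : ℝ) : ℂ) ∈ spectrum ℂ (A + ContinuousLinearMap.adjoint A) := by
  have hrC : (r : ℂ) ≠ 0 := by exact_mod_cast hr.ne'
  set X : F →L[ℂ] F := A + ContinuousLinearMap.adjoint A with hXdef
  obtain ⟨lam, hlam⟩ : ∃ lam : ℝ, lam = 2 * r * Real.cos θ := ⟨_, rfl⟩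
  rw [← hlam]
  set e : ℕ → F := fockVec A Ω r with he
  have he0 : e 0 = Ω := rfl
  have heS : ∀ k, e (k + 1) = ((r : ℂ)⁻¹) • A (e k) := fun k => rfl
  have hAe : ∀ k, A (e k) = (r : ℂ) • e (k + 1) := by
    intro k
    rw [heS, smul_smul, mul_inv_cancel₀ hrC, one_smul]
  have hAstarS : ∀ k, ContinuousLinearMap.adjoint A (e (k + 1)) = (r : ℂ) • e k := by
    intro k
    rw [heS, map_smul]
    have h2 : ContinuousLinearMap.adjoint A (A (e k))
        = (ContinuousLinearMap.adjoint A * A) (e k) := rfl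
    rw [h2, hAA]
    simp only [ContinuousLinearMap.smul_apply, ContinuousLinearMap.one_apply, smul_smul]
    congr 1
    field_simp
  have hinner : ∀ j k, (inner ℂ (e j) (e k) : ℂ) = if j = k then 1 else 0 := by
    intro j
    induction j with
    | zero =>
      intro k
      cases k with
      | zero => simp [he0, inner_self_eq_norm_sq_to_K, hΩ]
      | succ k =>
        rw [he0, heS, inner_smul_right]
        rw [← ContinuousLinearMap.adjoint_inner_left, hvac, inner_zero_left]
        simp
    | succ j ih =>
      intro k
      cases k with
      | zero =>
        rw [heS, he0, inner_smul_left]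
        rw [← ContinuousLinearMap.adjoint_inner_right, hvac, inner_zero_right]
        simp
      | succ k =>
        rw [heS, heS, inner_smul_left, inner_smul_right,
          ← ContinuousLinearMap.adjoint_inner_right]
        have h2 : ContinuousLinearMap.adjoint A (A (e k))
            = (ContinuousLinearMap.adjoint A * A) (e k) := rfl
        rw [h2, hAA]
        simp only [ContinuousLinearMap.smul_apply, ContinuousLinearMap.one_apply,
          inner_smul_right, ih k]
        rw [show ((starRingEnd ℂ) ((r:ℂ)⁻¹)) = (r:ℂ)⁻¹ by
          rw [← Complex.ofReal_inv, Complex.conj_ofReal]]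
        rcases eq_or_ne j k with h | h
        · subst h; simp; field_simp
        · simp [h]
  have honb : Orthonormal ℂ e := orthonormal_iff_ite.mpr hinner
  have hnorme : ∀ k, ‖e k‖ = 1 := honb.1
  -- coefficients
  obtain ⟨c, hcdef⟩ : ∃ c : ℕ → ℝ, c = fun k : ℕ => Real.sin (((k : ℝ) + 1) * θ) := ⟨_, rfl⟩
  have habs : ∀ k, |c k| ≤ 1 := fun k => by
    rw [hcdef]; exact abs_le.mpr ⟨Real.neg_one_le_sin _, Real.sin_le_one _⟩
  have htrig : ∀ k : ℕ, lam * c (k + 1) = r * (c k + c (k + 2)) := by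
    intro k
    simp only [hcdef, hlam]
    push_cast
    rw [show ((k : ℝ) + 2 + 1) * θ = (((k : ℝ) + 1 + 1) * θ) + θ by ring,
      show ((k : ℝ) + 1) * θ = (((k : ℝ) + 1 + 1) * θ) - θ by ring,
      Real.sin_add, Real.sin_sub]
    ring
  have htrig0 : lam * c 0 = r * c 1 := by
    simp only [hcdef, hlam]
    push_cast
    rw [show ((1 : ℝ) + 1) * θ = θ + θ by ring, show ((0:ℝ) + 1) * θ = θ by ring,
      Real.sin_add]
    ring
  have htrigC : ∀ k : ℕ, ((lam : ℂ)) * (c (k + 1) : ℂ)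
      = (r : ℂ) * ((c k : ℂ) + (c (k + 2) : ℂ)) := fun k => by exact_mod_cast htrig k
  have htrigC0 : ((lam : ℂ)) * (c 0 : ℂ) = (r : ℂ) * (c 1 : ℂ) := by exact_mod_cast htrig0
  set ξ : ℕ → F := fun N => ∑ k ∈ Finset.range (N + 1), ((c k : ℂ)) • e k with hξ
  have hXe0 : X (e 0) = (r : ℂ) • e 1 := by
    have h2 : X (e 0) = A (e 0) + ContinuousLinearMap.adjoint A (e 0) := rfl
    rw [h2, hAe 0, he0, hvac, add_zero]
  have hXeS : ∀ k, X (e (k + 1)) = (r : ℂ) • e (k + 2) + (r : ℂ) • e k := by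
    intro k
    have h2 : X (e (k + 1)) = A (e (k + 1)) + ContinuousLinearMap.adjoint A (e (k + 1)) := rfl
    rw [h2, hAe (k + 1), hAstarS k]
  have hkey : ∀ N, X (ξ N) - ((lam : ℂ)) • ξ N
      = ((r : ℂ) * c N) • e (N + 1) - ((r : ℂ) * c (N + 1)) • e N := by
    intro N
    induction N with
    | zero =>
      have h0 : ξ 0 = (c 0 : ℂ) • e 0 := by simp [hξ]
      rw [h0, map_smul, hXe0]
      match_scalars
      · ring
      · linear_combination -htrigC0
    | succ N ih =>
      have hsplit : ξ (N + 1) = ξ N + (c (N + 1) : ℂ) • e (N + 1) := by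
        simp [hξ, Finset.sum_range_succ]
      rw [hsplit, map_add, map_smul, hXeS N]
      calc X (ξ N) + (c (N + 1) : ℂ) • ((r : ℂ) • e (N + 2) + (r : ℂ) • e N)
            - (lam : ℂ) • (ξ N + (c (N + 1) : ℂ) • e (N + 1))
          = (X (ξ N) - (lam : ℂ) • ξ N)
            + (c (N + 1) : ℂ) • ((r : ℂ) • e (N + 2) + (r : ℂ) • e N)
            - ((lam : ℂ) * (c (N + 1) : ℂ)) • e (N + 1) := by
            module
        _ = ((r : ℂ) * c (N + 1)) • e (N + 2) - ((r : ℂ) * c (N + 2)) • e (N + 1) := by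
            rw [ih, htrigC N]
            module
  have hbound : ∀ N, ‖X (ξ N) - ((lam : ℂ)) • ξ N‖ ≤ 2 * r := by
    intro N
    rw [hkey N]
    refine le_trans (norm_sub_le _ _) ?_
    rw [norm_smul, norm_smul, hnorme, hnorme, mul_one, mul_one]
    have h1 : ∀ k, ‖(r : ℂ) * (c k : ℂ)‖ ≤ r := by
      intro k
      rw [norm_mul, Complex.norm_real, Complex.norm_real, Real.norm_eq_abs,
        Real.norm_eq_abs, abs_of_pos hr]
      nlinarith [habs k, abs_nonneg (c k)]
    linarith [h1 N, h1 (N + 1)]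
  have hnormξ : ∀ N, (‖ξ N‖ : ℝ) ^ 2 = ∑ k ∈ Finset.range (N + 1), (c k) ^ 2 := by
    intro N
    have h1 : (inner ℂ (ξ N) (ξ N) : ℂ)
        = ∑ k ∈ Finset.range (N + 1), (starRingEnd ℂ) ((c k : ℂ)) * (c k : ℂ) :=
      honb.inner_sum _ _ _
    have h2 : (inner ℂ (ξ N) (ξ N) : ℂ) = ((‖ξ N‖ : ℝ) : ℂ) ^ 2 := inner_self_eq_norm_sq_to_K _
    have h3 : ∑ k ∈ Finset.range (N + 1), (starRingEnd ℂ) ((c k : ℂ)) * (c k : ℂ)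
        = ((∑ k ∈ Finset.range (N + 1), (c k) ^ 2 : ℝ) : ℂ) := by
      push_cast
      refine Finset.sum_congr rfl fun k _ => ?_
      rw [Complex.conj_ofReal]; ring
    rw [h2, h3] at h1
    exact_mod_cast h1
  have hpair : ∀ m : ℕ, (Real.sin θ) ^ 2 / 2 ≤ c (2 * m) ^ 2 + c (2 * m + 1) ^ 2 := by
    intro m
    have hceq : c (2 * m) = Real.sin ((2 * (m:ℝ) + 1) * θ) := by
      simp only [hcdef]; push_cast; ring_nf
    have hb : c (2 * m + 1)
        = Real.sin ((2 * (m:ℝ) + 1) * θ) * Real.cos θ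
          + Real.cos ((2 * (m:ℝ) + 1) * θ) * Real.sin θ := by
      simp only [hcdef]
      push_cast
      rw [show ((2 * (m:ℝ) + 1 + 1) * θ) = ((2 * (m:ℝ) + 1) * θ) + θ by ring, Real.sin_add]
    rw [hceq, hb]
    exact sin_pair_aux (Real.sin ((2 * (m:ℝ) + 1) * θ)) (Real.cos ((2 * (m:ℝ) + 1) * θ))
      (Real.sin θ) (Real.cos θ) (Real.sin_sq_add_cos_sq _) (Real.sin_sq_add_cos_sq _)
  have hsumc : ∀ M : ℕ, ((M:ℝ) + 1) * ((Real.sin θ) ^ 2 / 2)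
      ≤ ∑ k ∈ Finset.range (2 * M + 2), c k ^ 2 := by
    intro M
    induction M with
    | zero =>
      have h0 := hpair 0
      norm_num at h0 ⊢
      rw [Finset.sum_range_succ, Finset.sum_range_one]
      linarith
    | succ M ih =>
      rw [show 2 * (M + 1) + 2 = (2 * M + 2) + 1 + 1 by ring, Finset.sum_range_succ,
        Finset.sum_range_succ]
      have h1 := hpair (M + 1)
      rw [show 2 * (M + 1) = 2 * M + 2 by ring, show 2 * M + 2 + 1 = 2 * M + 3 by ring] at h1
      push_cast
      rw [show 2 * M + 2 + 1 = 2 * M + 3 by ring]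
      linarith
  by_contra hspec
  rw [spectrum.mem_iff, not_not] at hspec
  obtain ⟨u, hu⟩ := hspec
  have hinv : ∀ N, ‖ξ N‖ ≤ ‖(↑u⁻¹ : F →L[ℂ] F)‖ * (2 * r) := by
    intro N
    have h1 : ((↑u⁻¹ : F →L[ℂ] F) * (↑u : F →L[ℂ] F)) (ξ N) = ξ N := by
      rw [u.inv_mul]; rfl
    have h2 : (↑u : F →L[ℂ] F) (ξ N) = (lam : ℂ) • ξ N - X (ξ N) := by
      rw [hu]
      simp [Algebra.algebraMap_eq_smul_one, ContinuousLinearMap.sub_apply,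
        ContinuousLinearMap.smul_apply, ContinuousLinearMap.one_apply]
    calc ‖ξ N‖ = ‖(↑u⁻¹ : F →L[ℂ] F) ((↑u : F →L[ℂ] F) (ξ N))‖ := by
          conv_lhs => rw [← h1]
          rfl
      _ ≤ ‖(↑u⁻¹ : F →L[ℂ] F)‖ * ‖(↑u : F →L[ℂ] F) (ξ N)‖ :=
          ContinuousLinearMap.le_opNorm _ _
      _ ≤ ‖(↑u⁻¹ : F →L[ℂ] F)‖ * (2 * r) := by
          rw [h2, show (lam : ℂ) • ξ N - X (ξ N) = -(X (ξ N) - (lam : ℂ) • ξ N) by abel,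
            norm_neg]
          exact mul_le_mul_of_nonneg_left (hbound N) (norm_nonneg _)
  set K := ‖(↑u⁻¹ : F →L[ℂ] F)‖ * (2 * r) with hK
  have hs2 : 0 < Real.sin θ ^ 2 / 2 := by positivity
  obtain ⟨M, hM⟩ := exists_nat_gt (K ^ 2 / (Real.sin θ ^ 2 / 2))
  have hM2 : K ^ 2 < ((M:ℝ)) * (Real.sin θ ^ 2 / 2) := (div_lt_iff₀ hs2).mp hM
  have hle := hsumc M
  have hξnorm := hnormξ (2 * M + 1)
  rw [show 2 * M + 1 + 1 = 2 * M + 2 by ring] at hξnorm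
  have hKN := hinv (2 * M + 1)
  have hξ0 : (0:ℝ) ≤ ‖ξ (2 * M + 1)‖ := norm_nonneg _
  nlinarith [hle, hKN, hM2, hξnorm, hs2, hξ0]


/-- Let `L` assign to each vector of a complex Hilbert space `H` its left creation operator
on the full Fock space `F = F(H)` (so that `L x` is linear in `x`, the annihilation operator
`(L x)*` kills the vacuum `Ω`, and `(L x)* (L y) = ⟪x, y⟫ • 1`).  Then the spectrum of the
self-adjoint operator `X = L v + (L v)*` equals the interval `[−2‖v‖, 2‖v‖]`. -/
theorem spectrum_creation_plus_annihilation
    {H F : Type*} [NormedAddCommGroup H] [InnerProductSpace ℂ H]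
    [NormedAddCommGroup F] [InnerProductSpace ℂ F] [CompleteSpace F]
    (L : H →ₗ[ℂ] (F →L[ℂ] F)) (Ω : F) (hΩ : ‖Ω‖ = 1)
    (hrel : ∀ x y : H,
      ContinuousLinearMap.adjoint (L x) * L y = (inner ℂ x y : ℂ) • (1 : F →L[ℂ] F))
    (hvac : ∀ x : H, ContinuousLinearMap.adjoint (L x) Ω = 0)
    (v : H) :
    spectrum ℂ (L v + ContinuousLinearMap.adjoint (L v))
      = (fun x : ℝ => (x : ℂ)) '' Set.Icc (-(2 * ‖v‖)) (2 * ‖v‖) := by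
  classical
  have hΩne : Ω ≠ 0 := fun h => by simp [h] at hΩ
  have hFnt : Nontrivial F := ⟨⟨Ω, 0, hΩne⟩⟩
  by_cases hv : v = 0
  · subst hv
    rw [show L (0 : H) = 0 from map_zero L]
    rw [show ContinuousLinearMap.adjoint (0 : F →L[ℂ] F) = 0 by
      rw [← ContinuousLinearMap.star_eq_adjoint, star_zero]]
    rw [add_zero, spectrum.zero_eq]
    simp
  · have hr : 0 < ‖v‖ := norm_pos_iff.mpr hv
    have hAA : ContinuousLinearMap.adjoint (L v) * L v = ((‖v‖ : ℂ) ^ 2) • (1 : F →L[ℂ] F) := by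
      rw [hrel v v, inner_self_eq_norm_sq_to_K]
      norm_cast
    have hvacA := hvac v
    have hsa : IsSelfAdjoint (L v + ContinuousLinearMap.adjoint (L v)) := by
      rw [IsSelfAdjoint, star_add, ContinuousLinearMap.star_eq_adjoint,
        ContinuousLinearMap.star_eq_adjoint, ContinuousLinearMap.adjoint_adjoint, add_comm]
    have hnA : ‖L v‖ = ‖v‖ := by
      have h1 := ContinuousLinearMap.norm_adjoint_comp_self (L v)
      have h2 : (ContinuousLinearMap.adjoint (L v)).comp (L v)
          = ContinuousLinearMap.adjoint (L v) * L v := rfl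
      rw [h2, hAA] at h1
      have h3 : ‖((‖v‖ : ℂ) ^ 2) • (1 : F →L[ℂ] F)‖ = ‖v‖ ^ 2 := by
        rw [norm_smul, norm_one, mul_one, norm_pow, Complex.norm_real, Real.norm_eq_abs,
          abs_of_pos hr]
      rw [h3] at h1
      nlinarith [norm_nonneg (L v)]
    have hXnorm : ‖L v + ContinuousLinearMap.adjoint (L v)‖ ≤ 2 * ‖v‖ := by
      refine le_trans (norm_add_le _ _) ?_
      rw [hnA, LinearIsometryEquiv.norm_map ContinuousLinearMap.adjoint (L v), hnA]
      linarith
    apply Set.eq_of_subset_of_subset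
    · intro z hz
      have hre := hsa.mem_spectrum_eq_re hz
      have hnorm := le_trans (spectrum.norm_le_norm_of_mem hz) hXnorm
      refine ⟨z.re, ?_, hre.symm⟩
      rw [hre, Complex.norm_real, Real.norm_eq_abs] at hnorm
      exact Set.mem_Icc.mpr ⟨by linarith [abs_le.mp hnorm |>.1], (abs_le.mp hnorm).2⟩
    · rintro z ⟨x, hx, rfl⟩
      set T : Set ℝ := {y : ℝ | (y : ℂ) ∈ spectrum ℂ (L v + ContinuousLinearMap.adjoint (L v))}
        with hT
      have hTclosed : IsClosed T :=
        (spectrum.isClosed _).preimage Complex.continuous_ofReal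
      have hIoo : Set.Ioo (-(2 * ‖v‖)) (2 * ‖v‖) ⊆ T := by
        intro y hy
        obtain ⟨hy1, hy2⟩ := hy
        have h2r : (0:ℝ) < 2 * ‖v‖ := by linarith
        have ht1 : -1 < y / (2 * ‖v‖) := by
          rw [lt_div_iff₀ h2r]; linarith
        have ht2 : y / (2 * ‖v‖) < 1 := by
          rw [div_lt_one h2r]; linarith
        have hcos : Real.cos (Real.arccos (y / (2 * ‖v‖))) = y / (2 * ‖v‖) :=
          Real.cos_arccos ht1.le ht2.le
        have hsin : Real.sin (Real.arccos (y / (2 * ‖v‖))) ≠ 0 := by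
          rw [Real.sin_arccos]
          exact ne_of_gt (Real.sqrt_pos.mpr (by nlinarith))
        have hmem := fock_aux_mem_spectrum (L v) Ω hΩ hr hAA hvacA
          (Real.arccos (y / (2 * ‖v‖))) hsin
        rw [show 2 * ‖v‖ * Real.cos (Real.arccos (y / (2 * ‖v‖))) = y by
          rw [hcos]; field_simp] at hmem
        exact hmem
      have hIcc : Set.Icc (-(2 * ‖v‖)) (2 * ‖v‖) ⊆ T := by
        rw [← closure_Ioo (show -(2 * ‖v‖) ≠ 2 * ‖v‖ by nlinarith)]
        exact closure_minimal hIoo hTclosed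
      exact hIcc hx
end
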